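/- arXiv:2604.05421 — 2 statements merged into one kernel-verified Lean document; each statement's English description precedes it below -/
import Mathlib

section
/- Let N ≥ 1, fix x ∈ ℝ^N \ {0}, ε > 0, and n ∈ {1,…,N}. Then ∫_{{ξ ∈ S^{N−1} : |⟨ξ,x⟩| > ε}} ξ_n / ⟨ξ,x⟩ dξ = (x_n / |x|²) · vol({ξ ∈ S^{N−1} : |⟨ξ,x⟩| > ε}), where dξ is the rotation-invariant surface measure on the unit sphere S^{N−1}. -/
/-!
The reflection `R` of `ℝ^N` in the line `ℝ x` is a linear isometry, so it preserves the
surface measure, and it fixes `⟨·, x⟩`, hence the domain of integration. Since `ξ + R ξ` is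
twice the projection `(⟨x, ξ⟩ / |x|²) x` of `ξ` on that line, the integrand and its composite
with `R` add up to the constant `2 x_n / |x|²`; averaging the integral with its image under `R`
gives the claim.
-/

open MeasureTheory Metric Set
open scoped RealInnerProductSpace Pointwise

namespace LinearIsometryEquiv

variable {E : Type*} [NormedAddCommGroup E] [NormedSpace ℝ E]

def sphereHomeomorph (R : E ≃ₗᵢ[ℝ] E) : sphere (0 : E) 1 ≃ₜ sphere (0 : E) 1 :=
  R.toHomeomorph.subtype fun ξ => by simp

@[simp]
theorem coe_sphereHomeomorph_apply (R : E ≃ₗᵢ[ℝ] E) (ξ : sphere (0 : E) 1) :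
    (R.sphereHomeomorph ξ : E) = R ξ :=
  rfl

theorem preimage_set_smul (R : E ≃ₗᵢ[ℝ] E) (t : Set ℝ) (B : Set E) :
    R ⁻¹' (t • B) = t • R ⁻¹' B := by
  ext v
  simp only [mem_preimage, Set.mem_smul]
  constructor
  · rintro ⟨c, hc, b, hb, hv⟩
    exact ⟨c, hc, R.symm b, by simpa using hb, by rw [← map_smul, hv]; simp⟩
  · rintro ⟨c, hc, b, hb, rfl⟩
    exact ⟨c, hc, R b, hb, by simp⟩

/-- `μ.toSphere s` is a multiple of the `μ`-measure of the cone `Ioo 0 1 • s`, and `R` maps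
cones over the sphere to cones. -/
theorem measurePreserving_sphereHomeomorph [MeasurableSpace E] [BorelSpace E] {μ : Measure E}
    (R : E ≃ₗᵢ[ℝ] E) (hR : MeasurePreserving R μ μ) :
    MeasurePreserving R.sphereHomeomorph μ.toSphere μ.toSphere := by
  refine ⟨R.sphereHomeomorph.continuous.measurable, ?_⟩
  ext s hs
  have hcoe : ((↑) '' (R.sphereHomeomorph ⁻¹' s) : Set E) = R ⁻¹' ((↑) '' s) := by
    ext v
    constructor
    · rintro ⟨ξ, hξ, rfl⟩
      exact ⟨_, hξ, rfl⟩
    · rintro ⟨ζ, hζ, hv⟩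
      refine ⟨R.sphereHomeomorph.symm ζ,
        by rwa [mem_preimage, Homeomorph.apply_symm_apply], ?_⟩
      apply R.injective
      rw [hv.symm, ← coe_sphereHomeomorph_apply, Homeomorph.apply_symm_apply]
  rw [Measure.map_apply R.sphereHomeomorph.continuous.measurable hs,
    Measure.toSphere_apply' _ (R.sphereHomeomorph.continuous.measurable hs),
    Measure.toSphere_apply' _ hs, hcoe, ← preimage_set_smul,
    hR.measure_preimage_emb R.toHomeomorph.measurableEmbedding]

end LinearIsometryEquiv

theorem MeasureTheory.MeasurePreserving.setIntegral_eq_mul_of_add_comp_eq {α : Type*}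
    [MeasurableSpace α] {μ : Measure α} [IsFiniteMeasure μ] {f : α → α}
    (hf : MeasurePreserving f μ μ) (hfe : MeasurableEmbedding f) {s : Set α}
    (hs : MeasurableSet s) (hfs : f ⁻¹' s = s) {g : α → ℝ} (hg : IntegrableOn g s μ)
    {c : ℝ} (hgc : ∀ a ∈ s, g a + g (f a) = 2 * c) :
    ∫ a in s, g a ∂μ = c * μ.real s := by
  have hcomp : ∫ a in s, g (f a) ∂μ = ∫ a in s, g a ∂μ := by
    rw [← hf.setIntegral_preimage_emb hfe g s, hfs]
  have hgf : IntegrableOn (fun a => g (f a)) s μ := by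
    rw [← hfs]
    exact (hf.integrableOn_comp_preimage hfe).2 hg
  have hsum : ∫ a in s, (g a + g (f a)) ∂μ = 2 * c * μ.real s := by
    rw [setIntegral_congr_fun hs hgc, setIntegral_const, smul_eq_mul, mul_comm]
  rw [integral_add hg hgf, hcomp] at hsum
  linarith

theorem integrableOn_div_of_lt_abs {α : Type*} [MeasurableSpace α] {μ : Measure α}
    [IsFiniteMeasure μ] {f g : α → ℝ} (hf : Measurable f) (hg : Measurable g) {C ε : ℝ}
    (hfC : ∀ a, |f a| ≤ C) (hε : 0 < ε) :
    IntegrableOn (fun a => f a / g a) {a | ε < |g a|} μ := by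
  refine Integrable.mono' (integrable_const (C / ε)) (hf.div hg).aestronglyMeasurable
    (ae_restrict_of_forall_mem (measurableSet_lt measurable_const hg.abs) fun a ha => ?_)
  rw [Real.norm_eq_abs, abs_div]
  exact div_le_div₀ ((abs_nonneg _).trans (hfC a)) (hfC a) hε ha.le

namespace Submodule

variable {E : Type*} [NormedAddCommGroup E] [InnerProductSpace ℝ E]

theorem add_reflection_span_singleton (x v : E) :
    v + (ℝ ∙ x).reflection v = (2 * (⟪x, v⟫ / ‖x‖ ^ 2)) • x := by
  rw [reflection_apply, starProjection_singleton, add_sub_cancel, two_nsmul, ← add_smul,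
    two_mul]
  norm_cast

theorem inner_reflection_span_singleton_self (x v : E) :
    ⟪(ℝ ∙ x).reflection v, x⟫ = ⟪v, x⟫ := by
  rw [← (ℝ ∙ x).reflection.inner_map_map v x,
    reflection_mem_subspace_eq_self (mem_span_singleton_self x)]

end Submodule

theorem EuclideanSpace.apply_div_inner_add_reflection_apply_div_inner {N : ℕ}
    (x v : EuclideanSpace ℝ (Fin N)) (n : Fin N) (hv : ⟪v, x⟫ ≠ 0) :
    v n / ⟪v, x⟫ + (ℝ ∙ x).reflection v n / ⟪(ℝ ∙ x).reflection v, x⟫ =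
      2 * (x n / ‖x‖ ^ 2) := by
  rw [Submodule.inner_reflection_span_singleton_self, ← add_div, ← PiLp.add_apply,
    Submodule.add_reflection_span_singleton, PiLp.smul_apply, smul_eq_mul, real_inner_comm]
  field_simp

theorem sphere_reflection_integral_general (N : ℕ)
    (x : EuclideanSpace ℝ (Fin N)) (ε : ℝ) (hε : 0 < ε) (n : Fin N) :
    ∫ ξ in {ξ : sphere (0 : EuclideanSpace ℝ (Fin N)) 1 |
        ε < |⟪(ξ : EuclideanSpace ℝ (Fin N)), x⟫|},
        (ξ : EuclideanSpace ℝ (Fin N)) n / ⟪(ξ : EuclideanSpace ℝ (Fin N)), x⟫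
        ∂(volume : Measure (EuclideanSpace ℝ (Fin N))).toSphere =
      x n / ‖x‖ ^ 2 *
        (((volume : Measure (EuclideanSpace ℝ (Fin N))).toSphere
          {ξ : sphere (0 : EuclideanSpace ℝ (Fin N)) 1 |
            ε < |⟪(ξ : EuclideanSpace ℝ (Fin N)), x⟫|}).toReal) := by
  set R := (ℝ ∙ x).reflection
  set S := {ξ : sphere (0 : EuclideanSpace ℝ (Fin N)) 1 |
    ε < |⟪(ξ : EuclideanSpace ℝ (Fin N)), x⟫|}
  have hinner : Measurable fun ξ : sphere (0 : EuclideanSpace ℝ (Fin N)) 1 =>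
      ⟪(ξ : EuclideanSpace ℝ (Fin N)), x⟫ := by fun_prop
  have hcoord : Measurable fun ξ : sphere (0 : EuclideanSpace ℝ (Fin N)) 1 =>
      (ξ : EuclideanSpace ℝ (Fin N)) n := by fun_prop
  have hcoord_le (ξ : sphere (0 : EuclideanSpace ℝ (Fin N)) 1) :
      |(ξ : EuclideanSpace ℝ (Fin N)) n| ≤ 1 := by
    simpa using PiLp.norm_apply_le (ξ : EuclideanSpace ℝ (Fin N)) n
  have hRS : R.sphereHomeomorph ⁻¹' S = S := by
    ext ξ
    simp [S, R, Submodule.inner_reflection_span_singleton_self]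
  exact (R.measurePreserving_sphereHomeomorph R.measurePreserving)
    |>.setIntegral_eq_mul_of_add_comp_eq R.sphereHomeomorph.measurableEmbedding
      (measurableSet_lt measurable_const hinner.abs) hRS
      (integrableOn_div_of_lt_abs hcoord hinner hcoord_le hε) fun ξ hξ =>
        EuclideanSpace.apply_div_inner_add_reflection_apply_div_inner x ξ n
          (abs_pos.mp (hε.trans hξ))

/-- For `x ≠ 0` in `ℝ^N`, `ε > 0`, and a coordinate `n`:
`∫_{{ξ ∈ S^{N−1} : |⟨ξ,x⟩| > ε}} ξ_n / ⟨ξ,x⟩ dξ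
  = (x_n/|x|²) vol({ξ ∈ S^{N−1} : |⟨ξ,x⟩| > ε})`,
where `dξ` is the rotation-invariant surface measure on the unit sphere. -/
theorem sphere_reflection_integral (N : ℕ) (hN : 1 ≤ N)
    (x : EuclideanSpace ℝ (Fin N)) (hx : x ≠ 0) (ε : ℝ) (hε : 0 < ε) (n : Fin N) :
    ∫ ξ in {ξ : sphere (0 : EuclideanSpace ℝ (Fin N)) 1 |
        ε < |⟪(ξ : EuclideanSpace ℝ (Fin N)), x⟫|},
        (ξ : EuclideanSpace ℝ (Fin N)) n / ⟪(ξ : EuclideanSpace ℝ (Fin N)), x⟫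
        ∂(volume : Measure (EuclideanSpace ℝ (Fin N))).toSphere =
      x n / ‖x‖ ^ 2 *
        (((volume : Measure (EuclideanSpace ℝ (Fin N))).toSphere
          {ξ : sphere (0 : EuclideanSpace ℝ (Fin N)) 1 |
            ε < |⟪(ξ : EuclideanSpace ℝ (Fin N)), x⟫|}).toReal) :=
  sphere_reflection_integral_general N x ε hε n
end

section
/- Let N ≥ 2, let m ≥ 1, and let p be a harmonic polynomial on ℝ^N, homogeneous of degree m. Then for every n ∈ {1,…,N}, the polynomial x ↦ x_n p(x) − (1/(2λ)) |x|² ∂p/∂x_n(x), where λ = m + (N−2)/2, is a harmonic polynomial homogeneous of degree m+1. -/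
/-!
Write `q = ∂p/∂xₙ` and `S = |x|²`. The Leibniz rule for the Laplacian gives
`Δ(xₙ p) = 2 q + xₙ Δp` and `Δ(S q) = (2N + 4k) q + S Δq` when `q` is homogeneous of degree `k`,
the middle term coming from Euler's identity `∑ xⱼ ∂q/∂xⱼ = k q`. Since `Δ` commutes with `∂/∂xₙ`,
`q` is harmonic of degree `m - 1`, so the Laplacian of `xₙ p - c S q` is `(2 - c (2N + 4(m - 1))) q`,
which vanishes for `c = 1/(2λ)`.
-/

open MvPolynomial

namespace MvPolynomial

variable {R σ : Type*}

theorem pderiv_pderiv_X [CommSemiring R] (i j k : σ) :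
    pderiv i (pderiv j (X k : MvPolynomial σ R)) = 0 := by
  rcases eq_or_ne k j with rfl | h
  · simp
  · simp [pderiv_X_of_ne h]

theorem pderiv_pderiv_comm [CommRing R] (i j : σ) (p : MvPolynomial σ R) :
    pderiv i (pderiv j p) = pderiv j (pderiv i p) := by
  -- the commutator of two derivations is a derivation, and this one kills every `X k`
  have h : ⁅pderiv i, pderiv j⁆ = (0 : Derivation R (MvPolynomial σ R) (MvPolynomial σ R)) :=
    derivation_ext fun k => by
      rw [Derivation.commutator_apply, pderiv_pderiv_X, pderiv_pderiv_X, sub_zero,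
        Derivation.zero_apply]
  exact sub_eq_zero.mp (congrArg (· p) h)

theorem isHomogeneous_sum_X_sq [CommSemiring R] [Fintype σ] :
    (∑ j : σ, X j ^ 2 : MvPolynomial σ R).IsHomogeneous 2 :=
  IsHomogeneous.sum _ _ _ fun j _ => by simpa using isHomogeneous_X_pow j 2

variable [Fintype σ]

section CommSemiring

variable [CommSemiring R]

noncomputable def laplacian : MvPolynomial σ R →ₗ[R] MvPolynomial σ R :=
  ∑ j : σ, (pderiv j).toLinearMap ∘ₗ (pderiv j).toLinearMap

theorem laplacian_apply (p : MvPolynomial σ R) :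
    laplacian p = ∑ j : σ, pderiv j (pderiv j p) := by
  simp [laplacian]

theorem laplacian_mul (f g : MvPolynomial σ R) :
    laplacian (f * g) =
      laplacian f * g + 2 * ∑ j : σ, pderiv j f * pderiv j g + f * laplacian g := by
  simp only [laplacian_apply, pderiv_mul, map_add, Finset.sum_mul, Finset.mul_sum,
    ← Finset.sum_add_distrib]
  refine Finset.sum_congr rfl fun j _ => ?_
  ring

theorem laplacian_X (i : σ) : laplacian (X i : MvPolynomial σ R) = 0 := by
  simp [laplacian_apply, pderiv_pderiv_X]

theorem laplacian_X_mul (i : σ) (p : MvPolynomial σ R) :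
    laplacian (X i * p) = 2 * pderiv i p + X i * laplacian p := by
  classical
  simp [laplacian_mul, laplacian_X, pderiv_X, Pi.single_apply]

theorem pderiv_sum_X_sq (i : σ) :
    pderiv i (∑ j : σ, X j ^ 2 : MvPolynomial σ R) = 2 * X i := by
  classical
  simp [pderiv_X, Pi.single_apply, mul_comm]

theorem laplacian_sum_X_sq :
    laplacian (∑ j : σ, X j ^ 2 : MvPolynomial σ R) = 2 * Fintype.card σ := by
  have pderiv_two (j : σ) : pderiv j (2 : MvPolynomial σ R) = 0 := by
    rw [← Nat.cast_ofNat, Derivation.map_natCast]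
  simp only [laplacian_apply, pderiv_sum_X_sq, pderiv_mul, pderiv_two, pderiv_X_self]
  simp [mul_comm]

theorem laplacian_sum_X_sq_mul {k : ℕ} {p : MvPolynomial σ R} (hp : p.IsHomogeneous k) :
    laplacian ((∑ j : σ, X j ^ 2) * p) =
      (2 * Fintype.card σ + 4 * k : MvPolynomial σ R) * p + (∑ j : σ, X j ^ 2) * laplacian p := by
  have euler : ∑ j : σ, pderiv j (∑ i : σ, X i ^ 2) * pderiv j p = 2 * k * p := by
    simp_rw [pderiv_sum_X_sq, mul_assoc, ← Finset.mul_sum, hp.sum_X_mul_pderiv, nsmul_eq_mul]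
  rw [laplacian_mul, laplacian_sum_X_sq, euler]
  ring

end CommSemiring

section CommRing

variable [CommRing R]

theorem laplacian_pderiv (i : σ) (p : MvPolynomial σ R) :
    laplacian (pderiv i p) = pderiv i (laplacian p) := by
  simp [laplacian_apply, pderiv_pderiv_comm i]

theorem laplacian_X_mul_sub_C_mul_sum_X_sq_mul_pderiv {m : ℕ} {p : MvPolynomial σ R}
    (hp : p.IsHomogeneous m) (hharm : laplacian p = 0) (i : σ) {c : R}
    (hc : c * (2 * Fintype.card σ + 4 * (m - 1 : ℕ)) = 2) :
    laplacian (X i * p - C c * (∑ j : σ, X j ^ 2) * pderiv i p) = 0 := by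
  have hc' : C c * (2 * Fintype.card σ + 4 * (m - 1 : ℕ) : MvPolynomial σ R) = 2 := by
    simpa [map_ofNat] using congrArg C hc
  rw [map_sub, mul_assoc, ← smul_eq_C_mul, map_smul, laplacian_X_mul,
    laplacian_sum_X_sq_mul hp.pderiv, laplacian_pderiv, hharm, map_zero, smul_eq_C_mul]
  linear_combination -pderiv i p * hc'

end CommRing

end MvPolynomial

/-- Let `N ≥ 2`, `m ≥ 1`, and let `p` be a harmonic polynomial on `ℝ^N`,
homogeneous of degree `m`. Then for each coordinate `n`, the polynomial
`x ↦ x_n p(x) − (1/(2λ)) |x|² ∂p/∂x_n(x)`, with `λ = m + (N−2)/2`, is a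
harmonic polynomial homogeneous of degree `m+1`. -/
theorem harmonic_projection (N : ℕ) (hN : 2 ≤ N) (m : ℕ) (hm : 1 ≤ m)
    (p : MvPolynomial (Fin N) ℝ) (hp : p.IsHomogeneous m)
    (hharm : (∑ j : Fin N, pderiv j (pderiv j p)) = 0) (n : Fin N) :
    (X n * p - C (1 / (2 * ((m : ℝ) + ((N : ℝ) - 2) / 2))) *
        (∑ j : Fin N, X j ^ 2) * pderiv n p).IsHomogeneous (m + 1) ∧
      (∑ j : Fin N, pderiv j (pderiv j
        (X n * p - C (1 / (2 * ((m : ℝ) + ((N : ℝ) - 2) / 2))) *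
          (∑ j : Fin N, X j ^ 2) * pderiv n p))) = 0 := by
  set c : ℝ := 1 / (2 * ((m : ℝ) + ((N : ℝ) - 2) / 2))
  have hc : c * (2 * Fintype.card (Fin N) + 4 * (m - 1 : ℕ)) = 2 := by
    have hlam : (2 : ℝ) * (m + (N - 2) / 2) ≠ 0 := by
      have : (1 : ℝ) ≤ m := by exact_mod_cast hm
      have : (2 : ℝ) ≤ N := by exact_mod_cast hN
      nlinarith
    rw [Fintype.card_fin, Nat.cast_pred hm, div_mul_eq_mul_div, one_mul, div_eq_iff hlam]
    ring
  refine ⟨?_, ?_⟩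
  · refine IsHomogeneous.sub ?_ ?_
    · simpa [add_comm] using (isHomogeneous_X ℝ n).mul hp
    · have := ((isHomogeneous_C _ c).mul isHomogeneous_sum_X_sq).mul (hp.pderiv (i := n))
      rwa [show 0 + 2 + (m - 1) = m + 1 by omega] at this
  · rw [← laplacian_apply] at hharm ⊢
    exact laplacian_X_mul_sub_C_mul_sum_X_sq_mul_pderiv hp hharm n hc
end
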